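/- Define the vector field V(p) = (−z·y, z·x, 0, z² − 1) on ℝ⁴. For every point p = (x, y, z, 0) of the connected-sum sphere S₊ (i.e. with f(p) = 1 and w = 0): (i) (fderiv ℝ f p)(V(p)) = 0, so V(p) is tangent to the hypersurface {f = 1}; (ii) α_p(V(p)) = 0, so V(p) lies in the contact structure ker α_p; and (iii) V(p) = 0 if and only if p = (0, 0, 1, 0) or p = (0, 0, −1, 0), i.e. V vanishes on S₊ exactly at the north and south poles. (This is the section used to compute the relative first Chern class c_{τ₀}(P_S) = 1.) -/

import Mathlib

noncomputable section

/-- The function `f(x,y,z,w) = x²/4 + y²/4 + z² - w²/2` from the Weinstein one-handle model. -/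
def fW (p : Fin 4 → ℝ) : ℝ :=
  (1 / 4) * p 0 ^ 2 + (1 / 4) * p 1 ^ 2 + p 2 ^ 2 - (1 / 2) * p 3 ^ 2

/-- The 1-form `α = (1/2)x dy - (1/2)y dx + 2z dw + w dz`. -/
def αW (p v : Fin 4 → ℝ) : ℝ :=
  (1 / 2) * p 0 * v 1 - (1 / 2) * p 1 * v 0 + 2 * p 2 * v 3 + p 3 * v 2

/-- The vector field `V(p) = (-zy, zx, 0, z² - 1)` used to compute the relative first Chern
class `c_{τ₀}(P_S) = 1`. -/
def VW (p : Fin 4 → ℝ) : Fin 4 → ℝ :=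
  ![-(p 2 * p 1), p 2 * p 0, 0, p 2 ^ 2 - 1]

lemma fW_hasFDerivAt (p : Fin 4 → ℝ) :
    HasFDerivAt fW
      ((1/4 : ℝ) • ((p 0 : ℝ) • (ContinuousLinearMap.proj 0 : (Fin 4 → ℝ) →L[ℝ] ℝ) +
          (p 0 : ℝ) • (ContinuousLinearMap.proj 0 : (Fin 4 → ℝ) →L[ℝ] ℝ)) +
        (1/4 : ℝ) • ((p 1 : ℝ) • (ContinuousLinearMap.proj 1 : (Fin 4 → ℝ) →L[ℝ] ℝ) +
          (p 1 : ℝ) • (ContinuousLinearMap.proj 1 : (Fin 4 → ℝ) →L[ℝ] ℝ)) +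
        ((p 2 : ℝ) • (ContinuousLinearMap.proj 2 : (Fin 4 → ℝ) →L[ℝ] ℝ) +
          (p 2 : ℝ) • (ContinuousLinearMap.proj 2 : (Fin 4 → ℝ) →L[ℝ] ℝ)) -
        (1/2 : ℝ) • ((p 3 : ℝ) • (ContinuousLinearMap.proj 3 : (Fin 4 → ℝ) →L[ℝ] ℝ) +
          (p 3 : ℝ) • (ContinuousLinearMap.proj 3 : (Fin 4 → ℝ) →L[ℝ] ℝ))) p := by
  have h : ∀ i : Fin 4, HasFDerivAt (fun q : Fin 4 → ℝ => q i)
      (ContinuousLinearMap.proj i : (Fin 4 → ℝ) →L[ℝ] ℝ) p := fun i => hasFDerivAt_apply i p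
  have hfW : fW = fun q : Fin 4 → ℝ =>
      (1/4 : ℝ) * (q 0 * q 0) + (1/4 : ℝ) * (q 1 * q 1) + q 2 * q 2 - (1/2 : ℝ) * (q 3 * q 3) := by
    funext q; simp [fW]; ring
  rw [hfW]
  exact (((((h 0).mul (h 0)).const_mul (1/4 : ℝ)).add
    (((h 1).mul (h 1)).const_mul (1/4 : ℝ))).add ((h 2).mul (h 2))).sub
    (((h 3).mul (h 3)).const_mul (1/2 : ℝ))

/-- On the connected-sum sphere `S₊ = {f = 1, w = 0}`, the vector field `V` is tangent to
`{f = 1}`, lies in the contact structure `ker α`, and vanishes exactly at the north and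
south poles `(0, 0, ±1, 0)`. -/
theorem chern_class_section (p : Fin 4 → ℝ) (hp : fW p = 1) (hw : p 3 = 0) :
    fderiv ℝ fW p (VW p) = 0 ∧
    αW p (VW p) = 0 ∧
    (VW p = 0 ↔ p = ![0, 0, 1, 0] ∨ p = ![0, 0, -1, 0]) := by
  simp only [fW] at hp
  refine ⟨?_, ?_, ?_⟩
  · rw [(fW_hasFDerivAt p).fderiv]
    simp [VW, hw]
    ring
  · have e0 : VW p 0 = -(p 2 * p 1) := rfl
    have e1 : VW p 1 = p 2 * p 0 := rfl
    have e2 : VW p 2 = 0 := rfl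
    have e3 : VW p 3 = p 2 ^ 2 - 1 := rfl
    simp only [αW, e0, e1, e2, e3]
    linear_combination 2 * p 2 * hp + p 2 * p 3 * hw
  · constructor
    · intro h
      have h0 := congrFun h 0
      have h1 := congrFun h 1
      have h3 := congrFun h 3
      simp [VW] at h0 h1 h3
      have hz : p 2 = 1 ∨ p 2 = -1 := by
        have : (p 2 - 1) * (p 2 + 1) = 0 := by nlinarith
        rcases mul_eq_zero.mp this with h' | h'
        · left; linarith
        · right; linarith
      have hzne : p 2 ≠ 0 := by rcases hz with h' | h' <;> simp [h']
      have hx : p 0 = 0 := h1.resolve_left hzne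
      have hy : p 1 = 0 := h0.resolve_left hzne
      rcases hz with h' | h'
      · left; funext i; fin_cases i <;> simp [hx, hy, h', hw]
      · right; funext i; fin_cases i <;> simp [hx, hy, h', hw]
    · rintro (h | h) <;> subst h <;> funext i <;> fin_cases i <;> norm_num [VW, Matrix.cons_val_two, Matrix.tail_cons, Matrix.head_cons]
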